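/- arXiv:solv-int/9912002 — 2 statements merged into one kernel-verified Lean document; each statement's English description precedes it below -/
import Mathlib

section
/- In the path face algebra, Δ is an algebra map for the concatenation product, i.e., Δ(T^A_B T^C_D) = Δ(T^A_B) Δ(T^C_D); in particular Δ(1) = Σ_k e_k ⊗ e^k, which is in general not equal to 1 ⊗ 1 (e.g., for any graph with at least two vertices). -/
/-- A finite oriented graph. -/
structure FGraph where
  V : Type
  E : Type
  [fV : Fintype V]
  [fE : Fintype E]
  [dV : DecidableEq V]
  [dE : DecidableEq E]
  src : E → V
  tgt : E → V

attribute [instance] FGraph.fV FGraph.fE FGraph.dV FGraph.dE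

namespace FGraph

variable (G : FGraph)

/-- Validity of a list of edges as a path starting at a given vertex. -/
def valid : G.V → List G.E → Bool
  | _, [] => true
  | v, e :: l => decide (G.src e = v) && valid (G.tgt e) l

/-- The range (end vertex) of a list of edges starting at a given vertex. -/
def rng : G.V → List G.E → G.V
  | v, [] => v
  | _, e :: l => rng (G.tgt e) l

/-- A path: a starting vertex together with a composable list of edges. -/
def GPath := {p : G.V × List G.E // G.valid p.1 p.2 = true}

instance : DecidableEq G.GPath := by unfold GPath; infer_instance

/-- The source `·P` of a path. -/
def srcP (p : G.GPath) : G.V := p.1.1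

/-- The range `P·` of a path. -/
def rngP (p : G.GPath) : G.V := G.rng p.1.1 p.1.2

/-- The length `#P` of a path. -/
def len (p : G.GPath) : ℕ := p.1.2.length

theorem valid_append : ∀ (l₁ : List G.E) (v : G.V) (l₂ : List G.E),
    G.valid v l₁ = true → G.valid (G.rng v l₁) l₂ = true → G.valid v (l₁ ++ l₂) = true := by
  intro l₁
  induction l₁ with
  | nil => intro v l₂ _ h2; simpa [valid, rng] using h2
  | cons e l ih =>
    intro v l₂ h1 h2
    simp only [valid, Bool.and_eq_true, decide_eq_true_eq, List.cons_append] at h1 ⊢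
    exact ⟨h1.1, ih _ _ h1.2 (by simpa [rng] using h2)⟩

/-- Concatenation `P⋅Q` of composable paths. -/
def comp (p q : G.GPath) (h : G.rngP p = G.srcP q) : G.GPath :=
  ⟨(p.1.1, p.1.2 ++ q.1.2),
    G.valid_append p.1.2 p.1.1 q.1.2 p.2
      (by rw [show G.rng p.1.1 p.1.2 = q.1.1 from h]; exact q.2)⟩

/-- The path of length zero at a vertex. -/
def vert (i : G.V) : G.GPath := ⟨(i, []), rfl⟩

/-- Index set of the basis `T^A_B`: pairs of paths of equal length. -/
def PP := {x : G.GPath × G.GPath // G.len x.1 = G.len x.2}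

instance : DecidableEq G.PP := by unfold PP; infer_instance

/-- Paths of length `n`, encoded with vectors (a `Fintype`). -/
def PathN (n : ℕ) := {q : G.V × List.Vector G.E n // G.valid q.1 q.2.1 = true}

instance (n : ℕ) : Fintype (G.PathN n) := by unfold PathN; infer_instance

/-- The finite set of all paths of length `n`. -/
def pathsLen (n : ℕ) : Finset G.GPath :=
  (Finset.univ : Finset (G.PathN n)).image (fun q => ⟨(q.1.1, q.1.2.1), q.2⟩)

variable (k : Type) [CommRing k]

/-- The path face algebra: the free `k`-module with basis `T^A_B`. -/
abbrev FF := G.PP →₀ k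

/-- The basis element `T^A_B`. -/
noncomputable def bT (A B : G.GPath) (h : G.len A = G.len B) : FF G k :=
  Finsupp.single ⟨(A, B), h⟩ 1

/-- Product of two basis elements:
`T^A_B T^C_D = δ(A·,·C) δ(B·,·D) T^{A⋅C}_{B⋅D}`. -/
noncomputable def mulB (x y : G.PP) : FF G k :=
  if h : G.rngP x.1.1 = G.srcP y.1.1 ∧ G.rngP x.1.2 = G.srcP y.1.2 then
    Finsupp.single ⟨(G.comp x.1.1 y.1.1 h.1, G.comp x.1.2 y.1.2 h.2), by
      have hx := x.2; have hy := y.2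
      simp only [len, comp, List.length_append] at *
      omega⟩ 1
  else 0

/-- The product, extended bilinearly to the whole of `F`. -/
noncomputable def mulL : FF G k →ₗ[k] FF G k →ₗ[k] FF G k :=
  Finsupp.lift (FF G k →ₗ[k] FF G k) k G.PP
    (fun a => Finsupp.lift (FF G k) k G.PP (fun b => G.mulB k a b))

/-- The product as a binary operation. -/
noncomputable def mulF (x y : FF G k) : FF G k := G.mulL k x y

/-- The unit `1 = Σ_{i,j vertices} T^i_j`. -/
noncomputable def oneF : FF G k := ∑ i : G.V, ∑ j : G.V, G.bT k (G.vert i) (G.vert j) rfl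

theorem len_mem_pathsLen {n : ℕ} {p : G.GPath} (hp : p ∈ G.pathsLen n) : G.len p = n := by
  unfold pathsLen at hp
  obtain ⟨q, _, rfl⟩ := Finset.mem_image.mp hp
  exact q.1.2.2

open TensorProduct in
/-- Coproduct on a basis element: `Δ(T^A_B) = Σ_{A' : #A' = #A} T^A_{A'} ⊗ T^{A'}_B`. -/
noncomputable def ΔB (a : G.PP) : TensorProduct k (FF G k) (FF G k) :=
  ∑ A' ∈ (G.pathsLen (G.len a.1.1)).attach,
    (Finsupp.single ⟨(a.1.1, A'.1), (G.len_mem_pathsLen A'.2).symm⟩ (1 : k)) ⊗ₜ[k]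
      (Finsupp.single ⟨(A'.1, a.1.2), (G.len_mem_pathsLen A'.2).trans a.2⟩ (1 : k))

/-- The coproduct, extended linearly. -/
noncomputable def ΔL : FF G k →ₗ[k] TensorProduct k (FF G k) (FF G k) :=
  Finsupp.lift _ k G.PP (G.ΔB k)

/-- The counit `ε(T^A_B) = δ_{A B}`, extended linearly. -/
noncomputable def εL : FF G k →ₗ[k] k :=
  Finsupp.lift k k G.PP (fun a => if a.1.1 = a.1.2 then 1 else 0)

end FGraph

attribute [reducible] FGraph.PP

namespace FGraph

variable (G : FGraph)

theorem rng_append : ∀ (l₁ : List G.E) (v : G.V) (l₂ : List G.E),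
    G.rng v (l₁ ++ l₂) = G.rng (G.rng v l₁) l₂ := by
  intro l₁
  induction l₁ with
  | nil => intro v l₂; rfl
  | cons e l ih => intro v l₂; simp [rng, ih]

theorem valid_append_iff : ∀ (l₁ : List G.E) (v : G.V) (l₂ : List G.E),
    G.valid v (l₁ ++ l₂) = (G.valid v l₁ && G.valid (G.rng v l₁) l₂) := by
  intro l₁
  induction l₁ with
  | nil => intro v l₂; simp [valid, rng]
  | cons e l ih => intro v l₂; simp [valid, rng, ih, Bool.and_assoc]

theorem mem_pathsLen {n : ℕ} {p : G.GPath} (hp : G.len p = n) : p ∈ G.pathsLen n := by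
  unfold pathsLen
  exact Finset.mem_image.mpr ⟨⟨(p.1.1, ⟨p.1.2, hp⟩), p.2⟩, Finset.mem_univ _, by apply Subtype.ext; rfl⟩

theorem valid_take (p : G.GPath) (m : ℕ) : G.valid p.1.1 (p.1.2.take m) = true := by
  have h := p.2
  rw [← List.take_append_drop m p.1.2, G.valid_append_iff, Bool.and_eq_true] at h
  exact h.1

theorem valid_drop (p : G.GPath) (m : ℕ) :
    G.valid (G.rng p.1.1 (p.1.2.take m)) (p.1.2.drop m) = true := by
  have h := p.2
  rw [← List.take_append_drop m p.1.2, G.valid_append_iff, Bool.and_eq_true] at h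
  exact h.2

/-- The prefix of a path. -/
def takeP (p : G.GPath) (m : ℕ) : G.GPath := ⟨(p.1.1, p.1.2.take m), G.valid_take p m⟩

/-- The suffix of a path. -/
def dropP (p : G.GPath) (m : ℕ) : G.GPath :=
  ⟨(G.rng p.1.1 (p.1.2.take m), p.1.2.drop m), G.valid_drop p m⟩

theorem rngP_takeP (p : G.GPath) (m : ℕ) : G.rngP (G.takeP p m) = G.srcP (G.dropP p m) := rfl

theorem comp_take_drop (p : G.GPath) (m : ℕ) :
    G.comp (G.takeP p m) (G.dropP p m) (G.rngP_takeP p m) = p := by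
  apply Subtype.ext
  show (p.1.1, p.1.2.take m ++ p.1.2.drop m) = p.1
  rw [List.take_append_drop]

theorem len_takeP (p : G.GPath) (m : ℕ) (h : m ≤ G.len p) : G.len (G.takeP p m) = m := by
  simp only [len, takeP, List.length_take]
  exact Nat.min_eq_left h

theorem len_dropP (p : G.GPath) (m : ℕ) : G.len (G.dropP p m) = G.len p - m := by
  simp [len, dropP]

theorem len_comp (A B : G.GPath) (h : G.rngP A = G.srcP B) :
    G.len (G.comp A B h) = G.len A + G.len B := by
  simp [len, comp]

theorem takeP_comp (A B : G.GPath) (h : G.rngP A = G.srcP B) :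
    G.takeP (G.comp A B h) (G.len A) = A := by
  apply Subtype.ext
  show (A.1.1, (A.1.2 ++ B.1.2).take A.1.2.length) = A.1
  rw [List.take_left]

theorem dropP_comp (A B : G.GPath) (h : G.rngP A = G.srcP B) :
    G.dropP (G.comp A B h) (G.len A) = B := by
  apply Subtype.ext
  show (G.rng A.1.1 ((A.1.2 ++ B.1.2).take A.1.2.length), (A.1.2 ++ B.1.2).drop A.1.2.length) = B.1
  rw [List.take_left, List.drop_left]
  have hB : G.rng A.1.1 A.1.2 = B.1.1 := h
  rw [hB]

theorem sum_split {M : Type*} [AddCommMonoid M] (m n : ℕ) (f : G.GPath → M) :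
    (∑ P ∈ G.pathsLen (m + n), f P)
      = ∑ A ∈ G.pathsLen m, ∑ B ∈ G.pathsLen n,
          (if h : G.rngP A = G.srcP B then f (G.comp A B h) else 0) := by
  rw [← Finset.sum_product']
  rw [← Finset.sum_filter_of_ne (p := fun x : G.GPath × G.GPath => G.rngP x.1 = G.srcP x.2)
    (fun x _ hx => by by_contra hc; exact hx (dif_neg hc))]
  refine Finset.sum_bij' (fun P _ => (G.takeP P m, G.dropP P m))
    (fun x hx => G.comp x.1 x.2 (Finset.mem_filter.mp hx).2) ?_ ?_ ?_ ?_ ?_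
  · intro P hP
    have hlen := G.len_mem_pathsLen hP
    rw [Finset.mem_filter, Finset.mem_product]
    refine ⟨⟨G.mem_pathsLen (G.len_takeP P m (by omega)), G.mem_pathsLen ?_⟩, rfl⟩
    rw [G.len_dropP]; omega
  · intro x hx
    have hx' := Finset.mem_filter.mp hx
    have hx'' := Finset.mem_product.mp hx'.1
    apply G.mem_pathsLen
    rw [G.len_comp, G.len_mem_pathsLen hx''.1, G.len_mem_pathsLen hx''.2]
  · intro P hP
    exact G.comp_take_drop P m
  · intro x hx
    have hx' := Finset.mem_filter.mp hx
    have hx'' := Finset.mem_product.mp hx'.1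
    have h1 : m = G.len x.1 := (G.len_mem_pathsLen hx''.1).symm
    subst h1
    show (G.takeP (G.comp x.1 x.2 hx'.2) (G.len x.1), G.dropP (G.comp x.1 x.2 hx'.2) (G.len x.1)) = x
    rw [G.takeP_comp x.1 x.2 hx'.2, G.dropP_comp x.1 x.2 hx'.2]
  · intro P hP
    rw [dif_pos (G.rngP_takeP P m), G.comp_take_drop]

end FGraph

namespace FGraph

variable (G : FGraph)

variable (k : Type) [CommRing k]

/-- `T^A_B` as a total function (zero if the lengths differ). -/
noncomputable def TT (A B : G.GPath) : FF G k :=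
  if h : G.len A = G.len B then Finsupp.single ⟨(A, B), h⟩ 1 else 0

theorem TT_eq (A B : G.GPath) (h : G.len A = G.len B) :
    G.TT k A B = Finsupp.single ⟨(A, B), h⟩ 1 := dif_pos h

theorem ΔL_single (a : G.PP) (c : k) :
    G.ΔL k (Finsupp.single a c) = c • G.ΔB k a := by
  rw [ΔL, Finsupp.lift_apply,
    Finsupp.sum_single_index (h := fun x r => r • G.ΔB k x) (by simp)]

theorem mulL_single (a b : G.PP) (c d : k) :
    G.mulL k (Finsupp.single a c) (Finsupp.single b d) = (c * d) • G.mulB k a b := by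
  rw [mulL, Finsupp.lift_apply,
    Finsupp.sum_single_index
      (h := fun x r => r • (Finsupp.lift (FF G k) k G.PP fun b' => G.mulB k x b'))
      (by simp)]
  rw [LinearMap.smul_apply, Finsupp.lift_apply,
    Finsupp.sum_single_index (h := fun x r => r • G.mulB k a x) (by simp), smul_smul]

open TensorProduct in
theorem ΔB_eq (a : G.PP) :
    G.ΔB k a = ∑ A' ∈ G.pathsLen (G.len a.1.1), (G.TT k a.1.1 A') ⊗ₜ[k] (G.TT k A' a.1.2) := by
  rw [ΔB, ← Finset.sum_attach (G.pathsLen (G.len a.1.1))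
    (fun A' => (G.TT k a.1.1 A') ⊗ₜ[k] (G.TT k A' a.1.2))]
  refine Finset.sum_congr rfl fun x _ => ?_
  rw [G.TT_eq k _ _ (G.len_mem_pathsLen x.2).symm,
      G.TT_eq k _ _ ((G.len_mem_pathsLen x.2).trans a.2)]

theorem mulB_eq (x y : G.PP) :
    G.mulB k x y
      = if h : G.rngP x.1.1 = G.srcP y.1.1 ∧ G.rngP x.1.2 = G.srcP y.1.2 then
          G.TT k (G.comp x.1.1 y.1.1 h.1) (G.comp x.1.2 y.1.2 h.2)
        else 0 := by
  rw [mulB]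
  split_ifs with h
  · rw [G.TT_eq k _ _ (by rw [G.len_comp, G.len_comp, x.2, y.2])]
  · rfl

theorem mulL_TT (A B C D : G.GPath) :
    G.mulL k (G.TT k A B) (G.TT k C D)
      = if h : G.len A = G.len B ∧ G.len C = G.len D then
          G.mulB k ⟨(A, B), h.1⟩ ⟨(C, D), h.2⟩
        else 0 := by
  rw [TT, TT]
  by_cases h1 : G.len A = G.len B <;> by_cases h2 : G.len C = G.len D
  · rw [dif_pos h1, dif_pos h2, dif_pos (⟨h1, h2⟩ : _ ∧ _)]
    exact (G.mulL_single k _ _ 1 1).trans (by rw [one_mul, one_smul])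
  · rw [dif_pos h1, dif_neg h2, dif_neg (fun hc : _ ∧ _ => h2 hc.2)]; simp
  · rw [dif_neg h1, dif_pos h2, dif_neg (fun hc : _ ∧ _ => h1 hc.1)]; simp
  · rw [dif_neg h1, dif_neg h2, dif_neg (fun hc : _ ∧ _ => h1 hc.1)]; simp

open TensorProduct in
theorem key (a b : G.PP) :
    G.ΔL k (G.mulB k a b)
      = TensorProduct.map₂ (G.mulL k) (G.mulL k) (G.ΔB k a) (G.ΔB k b) := by
  rw [G.ΔB_eq k a, G.ΔB_eq k b]
  simp only [map_sum, LinearMap.coe_sum, Finset.sum_apply, map₂_apply_tmul, map_tmul]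
  rw [G.mulB_eq]
  by_cases H : G.rngP a.1.1 = G.srcP b.1.1 ∧ G.rngP a.1.2 = G.srcP b.1.2
  · rw [dif_pos H,
      G.TT_eq k _ _ (by rw [G.len_comp, G.len_comp, a.2, b.2])]
    erw [G.ΔL_single]
    rw [one_smul, G.ΔB_eq]
    change (∑ A' ∈ G.pathsLen (G.len (G.comp a.1.1 b.1.1 H.1)),
      (G.TT k (G.comp a.1.1 b.1.1 H.1) A') ⊗ₜ[k] (G.TT k A' (G.comp a.1.2 b.1.2 H.2))) = _
    rw [G.len_comp a.1.1 b.1.1 H.1]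
    rw [G.sum_split (G.len a.1.1) (G.len b.1.1)
      (fun P => (G.TT k (G.comp a.1.1 b.1.1 H.1) P) ⊗ₜ[k] (G.TT k P (G.comp a.1.2 b.1.2 H.2)))]
    rw [Finset.sum_comm]
    refine Finset.sum_congr rfl fun B' hB' => Finset.sum_congr rfl fun A' hA' => ?_
    rw [G.mulL_TT, G.mulL_TT,
      dif_pos (⟨(G.len_mem_pathsLen hA').symm, (G.len_mem_pathsLen hB').symm⟩ : _ ∧ _),
      dif_pos (⟨(G.len_mem_pathsLen hA').trans a.2, (G.len_mem_pathsLen hB').trans b.2⟩ : _ ∧ _),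
      G.mulB_eq, G.mulB_eq]
    by_cases hc : G.rngP A' = G.srcP B'
    · rw [dif_pos hc, dif_pos (⟨H.1, hc⟩ : _ ∧ _), dif_pos (⟨hc, H.2⟩ : _ ∧ _)]
    · rw [dif_neg hc, dif_neg (fun h : _ ∧ _ => hc h.2), zero_tmul]
  · rw [dif_neg H, LinearMap.map_zero]
    symm
    refine Finset.sum_eq_zero fun B' hB' => Finset.sum_eq_zero fun A' hA' => ?_
    rw [G.mulL_TT, G.mulL_TT,
      dif_pos (⟨(G.len_mem_pathsLen hA').symm, (G.len_mem_pathsLen hB').symm⟩ : _ ∧ _),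
      dif_pos (⟨(G.len_mem_pathsLen hA').trans a.2, (G.len_mem_pathsLen hB').trans b.2⟩ : _ ∧ _),
      G.mulB_eq, G.mulB_eq]
    by_cases h1 : G.rngP a.1.1 = G.srcP b.1.1
    · have h2 : ¬ (G.rngP a.1.2 = G.srcP b.1.2) := fun h => H ⟨h1, h⟩
      rw [dif_neg (fun h : _ ∧ _ => h2 h.2), tmul_zero]
    · rw [dif_neg (fun h : _ ∧ _ => h1 h.1), zero_tmul]

open TensorProduct in
theorem part1 (x y : FF G k) :
    G.ΔL k (G.mulF k x y)
      = TensorProduct.map₂ (G.mulL k) (G.mulL k) (G.ΔL k x) (G.ΔL k y) := by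
  induction x using Finsupp.induction_linear with
  | zero => simp [mulF]
  | add f g hf hg =>
    simp only [mulF] at hf hg ⊢
    simp [map_add, LinearMap.add_apply, hf, hg]
  | single a c =>
    induction y using Finsupp.induction_linear with
    | zero => simp [mulF]
    | add f g hf hg =>
      simp only [mulF] at hf hg ⊢
      simp [map_add, LinearMap.add_apply, hf, hg]
    | single b d =>
      rw [mulF, G.mulL_single, map_smul, G.key, G.ΔL_single, G.ΔL_single]
      simp [LinearMap.smul_apply, smul_smul, mul_comm]

end FGraph

namespace FGraph

variable (G : FGraph) (k : Type) [CommRing k]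

theorem vert_injective : Function.Injective G.vert := fun i j h =>
  congrArg (fun p : G.GPath => p.1.1) h

theorem pathsLen_zero : G.pathsLen 0 = Finset.univ.image G.vert := by
  ext p
  simp only [Finset.mem_image, Finset.mem_univ, true_and]
  constructor
  · intro hp
    have h0 := G.len_mem_pathsLen hp
    refine ⟨p.1.1, ?_⟩
    apply Subtype.ext
    have he : p.1.2 = [] := List.length_eq_zero_iff.mp h0
    show (p.1.1, ([] : List G.E)) = p.1
    rw [← he]
  · rintro ⟨v, rfl⟩
    exact G.mem_pathsLen rfl

open TensorProduct in
theorem part2 :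
    G.ΔL k (G.oneF k)
      = ∑ v : G.V, (∑ i : G.V, G.bT k (G.vert i) (G.vert v) rfl) ⊗ₜ[k]
          (∑ j : G.V, G.bT k (G.vert v) (G.vert j) rfl) := by
  have hone : ∀ i j : G.V, G.ΔL k (G.bT k (G.vert i) (G.vert j) rfl)
      = ∑ v : G.V, (G.bT k (G.vert i) (G.vert v) rfl) ⊗ₜ[k] (G.bT k (G.vert v) (G.vert j) rfl) := by
    intro i j
    unfold bT
    erw [G.ΔL_single]
    rw [one_smul, G.ΔB_eq]
    change (∑ A' ∈ G.pathsLen 0,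
      (G.TT k (G.vert i) A') ⊗ₜ[k] (G.TT k A' (G.vert j))) = _
    rw [G.pathsLen_zero, Finset.sum_image (fun a _ b _ h => G.vert_injective h)]
    refine Finset.sum_congr rfl fun v _ => ?_
    rw [G.TT_eq k (G.vert i) (G.vert v) rfl, G.TT_eq k (G.vert v) (G.vert j) rfl]
  rw [oneF, map_sum]
  simp only [map_sum, hone]
  rw [show (∑ i : G.V, ∑ j : G.V, ∑ v : G.V,
        (G.bT k (G.vert i) (G.vert v) rfl) ⊗ₜ[k] (G.bT k (G.vert v) (G.vert j) rfl))
      = ∑ i : G.V, ∑ v : G.V, ∑ j : G.V,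
        (G.bT k (G.vert i) (G.vert v) rfl) ⊗ₜ[k] (G.bT k (G.vert v) (G.vert j) rfl)
    from Finset.sum_congr rfl fun i _ => Finset.sum_comm]
  rw [Finset.sum_comm]
  simp only [TensorProduct.sum_tmul, TensorProduct.tmul_sum]
  exact Finset.sum_congr rfl fun v _ => Finset.sum_comm

open TensorProduct in
theorem part3 (hV : Nontrivial G.V) (hk : Nontrivial k) :
    G.ΔL k (G.oneF k) ≠ (G.oneF k) ⊗ₜ[k] (G.oneF k) := by
  obtain ⟨u, w, huw⟩ := hV
  intro hEq
  have hcond : ∀ (i j a b : G.V) (h : G.len (G.vert i) = G.len (G.vert j))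
      (h' : G.len (G.vert a) = G.len (G.vert b)),
      ((⟨(G.vert i, G.vert j), h⟩ : G.PP) = ⟨(G.vert a, G.vert b), h'⟩) ↔ (i = a ∧ j = b) := by
    intro i j a b h h'
    constructor
    · intro he
      exact ⟨congrArg (fun x : G.PP => x.1.1.1.1) he, congrArg (fun x : G.PP => x.1.2.1.1) he⟩
    · rintro ⟨rfl, rfl⟩; rfl
  let p : G.PP := ⟨(G.vert u, G.vert u), rfl⟩
  let q : G.PP := ⟨(G.vert w, G.vert w), rfl⟩
  let φ : TensorProduct k (FF G k) (FF G k) →ₗ[k] k :=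
    (TensorProduct.lid k k).toLinearMap ∘ₗ
      TensorProduct.map (Finsupp.lapply p) (Finsupp.lapply q)
  have hφ : ∀ x y : FF G k, φ (x ⊗ₜ[k] y) = x p * y q := by
    intro x y
    simp [φ, TensorProduct.map_tmul, Finsupp.lapply_apply, TensorProduct.lid_tmul, smul_eq_mul]
  have honep : (G.oneF k) p = 1 := by
    simp only [oneF, bT, p, Finsupp.finset_sum_apply, Finset.sum_apply, Finsupp.single_apply, hcond]
    simp only [Subtype.ext_iff, Prod.ext_iff, G.vert_injective.eq_iff]
    simp [ite_and, Finset.sum_ite_eq']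
  have honeq : (G.oneF k) q = 1 := by
    simp only [oneF, bT, q, Finsupp.finset_sum_apply, Finset.sum_apply, Finsupp.single_apply, hcond]
    simp only [Subtype.ext_iff, Prod.ext_iff, G.vert_injective.eq_iff]
    simp [ite_and, Finset.sum_ite_eq']
  have hrhs : φ ((G.oneF k) ⊗ₜ[k] (G.oneF k)) = 1 := by
    rw [hφ, honep, honeq, one_mul]
  have hlhs : φ (G.ΔL k (G.oneF k)) = 0 := by
    rw [G.part2 k, map_sum]
    refine Finset.sum_eq_zero fun v _ => ?_
    rw [hφ]
    have h1 : (∑ i : G.V, G.bT k (G.vert i) (G.vert v) rfl) p = if v = u then 1 else 0 := by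
      simp only [bT, p, Finsupp.finset_sum_apply, Finset.sum_apply, Finsupp.single_apply, hcond]
      simp only [Subtype.ext_iff, Prod.ext_iff, G.vert_injective.eq_iff]
      simp [ite_and, Finset.sum_ite_eq']
    have h2 : (∑ j : G.V, G.bT k (G.vert v) (G.vert j) rfl) q = if v = w then 1 else 0 := by
      simp only [bT, q, Finsupp.finset_sum_apply, Finset.sum_apply, Finsupp.single_apply, hcond]
      simp only [Subtype.ext_iff, Prod.ext_iff, G.vert_injective.eq_iff]
      simp [ite_and, Finset.sum_ite_eq']
    rw [h1, h2]
    by_cases hvu : v = u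
    · rw [if_pos hvu, if_neg (fun h => huw (hvu.symm.trans h)), mul_zero]
    · rw [if_neg hvu, zero_mul]
  rw [hEq, hrhs] at hlhs
  exact one_ne_zero hlhs

end FGraph




open FGraph TensorProduct in
/-- in the path face algebra, `Δ` is an algebra map for the concatenation
product, `Δ(xy) = Δ(x)Δ(y)` (the product on `F ⊗ F` being componentwise); in
particular `Δ(1) = Σ_k e_k ⊗ e^k`, which is not equal to `1 ⊗ 1` whenever the graph
has at least two vertices. -/
theorem path_coproduct_is_algebra_map (G : FGraph) (k : Type) [CommRing k] :
    (∀ x y : FF G k,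
      G.ΔL k (G.mulF k x y)
        = TensorProduct.map₂ (G.mulL k) (G.mulL k) (G.ΔL k x) (G.ΔL k y)) ∧
    (G.ΔL k (G.oneF k)
      = ∑ v : G.V, (∑ i : G.V, G.bT k (G.vert i) (G.vert v) rfl) ⊗ₜ[k]
          (∑ j : G.V, G.bT k (G.vert v) (G.vert j) rfl)) ∧
    (Nontrivial G.V → Nontrivial k →
      G.ΔL k (G.oneF k) ≠ (G.oneF k) ⊗ₜ[k] (G.oneF k)) :=
  ⟨fun x y => G.part1 k x y, G.part2 k, fun hV hk => G.part3 k hV hk⟩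
end

section
/- The maps R^±: F → U defined by R^+(f) = ⟨R, f ⊗ id⟩ and R^-(f) = ⟨R̃, id ⊗ f⟩ are algebra homomorphisms from F to U, given that R satisfies R Δ(a) = Δ'(a) R for all a ∈ U (quasitriangularity) and the hexagon axioms (Δ ⊗ id)(R) = R_{13} R_{23}, (id ⊗ Δ)(R) = R_{13} R_{12}. -/
open TensorProduct Coalgebra HopfAlgebra

section AntipodeMul

variable {k : Type} [CommRing k] {U : Type} [Ring U] [HopfAlgebra k U]
variable {ι κ ι₁ ι₂ κ₁ κ₂ : Type*}

local notation "𝑺" => HopfAlgebra.antipode (R := k)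
local notation "ε" => Coalgebra.counit (R := k)

noncomputable def mulRepr {a b : U} (ra : Coalgebra.Repr k a ι) (rb : Coalgebra.Repr k b κ) :
    Coalgebra.Repr k (a * b) (ι × κ) where
  index := ra.index ×ˢ rb.index
  left := fun ij => ra.left ij.1 * rb.left ij.2
  right := fun ij => ra.right ij.1 * rb.right ij.2
  eq := by
    rw [Finset.sum_product, Bialgebra.comul_mul, ← ra.eq, ← rb.eq, Finset.sum_mul_sum]
    simp [Algebra.TensorProduct.tmul_mul_tmul]

lemma sum_counit_right_smul {c : U} (r : Coalgebra.Repr k c ι) :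
    ∑ i ∈ r.index, ε (r.right i) • r.left i = c := by
  have h := congrArg (TensorProduct.rid k U) (Coalgebra.sum_tmul_counit_eq r)
  rw [map_sum] at h
  simp only [TensorProduct.rid_tmul, one_smul] at h
  exact h

lemma sum_counit_left_smul {c : U} (r : Coalgebra.Repr k c ι) :
    ∑ i ∈ r.index, ε (r.left i) • r.right i = c := by
  have h := congrArg (TensorProduct.lid k U) (Coalgebra.sum_counit_tmul_eq r)
  rw [map_sum] at h
  simp only [TensorProduct.lid_tmul, one_smul] at h
  exact h

noncomputable def T3 (A B C : U) : U ⊗[k] (U ⊗[k] U) →ₗ[k] U :=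
  LinearMap.mul' k U ∘ₗ
    TensorProduct.map (𝑺 ∘ₗ LinearMap.mulRight k A)
      (LinearMap.mul' k U ∘ₗ
        TensorProduct.map (LinearMap.mulRight k B)
          (LinearMap.mulLeft k (𝑺 C) ∘ₗ 𝑺))

@[simp] lemma T3_tmul (A B C x y z : U) :
    T3 A B C (x ⊗ₜ[k] (y ⊗ₜ[k] z)) = 𝑺 (x * A) * ((y * B) * (𝑺 C * 𝑺 z)) := by
  simp [T3]

noncomputable def T3' (X Y Z : U) : U ⊗[k] (U ⊗[k] U) →ₗ[k] U :=
  LinearMap.mul' k U ∘ₗ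
    TensorProduct.map (𝑺 ∘ₗ LinearMap.mulLeft k X)
      (LinearMap.mul' k U ∘ₗ
        TensorProduct.map (LinearMap.mulLeft k Y)
          (LinearMap.mulRight k (𝑺 Z) ∘ₗ 𝑺))

@[simp] lemma T3'_tmul (X Y Z u v w : U) :
    T3' X Y Z (u ⊗ₜ[k] (v ⊗ₜ[k] w)) = 𝑺 (X * u) * ((Y * v) * (𝑺 w * 𝑺 Z)) := by
  simp [T3']

lemma coassoc_sum_left (A B C : U) {a : U} (ra : Coalgebra.Repr k a ι)
    (ra1 : ∀ i, Coalgebra.Repr k (ra.left i) ι₁) (ra2 : ∀ i, Coalgebra.Repr k (ra.right i) ι₂) :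
    (∑ i ∈ ra.index, ∑ p ∈ (ra2 i).index,
      𝑺 (ra.left i * A) * (((ra2 i).left p * B) * (𝑺 C * 𝑺 ((ra2 i).right p))))
    = ∑ i ∈ ra.index, ∑ p ∈ (ra1 i).index,
      𝑺 ((ra1 i).left p * A) * (((ra1 i).right p * B) * (𝑺 C * 𝑺 (ra.right i))) := by
  have h2 := congrArg (T3 A B C) (Coalgebra.sum_tmul_tmul_eq ra ra1 ra2)
  simpa [map_sum] using h2.symm

lemma coassoc_sum_right (X Y Z : U) {b : U} (rb : Coalgebra.Repr k b κ)
    (rb1 : ∀ j, Coalgebra.Repr k (rb.left j) κ₁) (rb2 : ∀ j, Coalgebra.Repr k (rb.right j) κ₂) :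
    (∑ j ∈ rb.index, ∑ q ∈ (rb2 j).index,
      𝑺 (X * rb.left j) * ((Y * (rb2 j).left q) * (𝑺 ((rb2 j).right q) * 𝑺 Z)))
    = ∑ j ∈ rb.index, ∑ q ∈ (rb1 j).index,
      𝑺 (X * (rb1 j).left q) * ((Y * (rb1 j).right q) * (𝑺 (rb.right j) * 𝑺 Z)) := by
  have h2 := congrArg (T3' X Y Z) (Coalgebra.sum_tmul_tmul_eq rb rb1 rb2)
  simpa [map_sum] using h2.symm

lemma M_eq_antipode_mul {a b : U} (ra : Coalgebra.Repr k a ι) (rb : Coalgebra.Repr k b κ)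
    (ra2 : ∀ i, Coalgebra.Repr k (ra.right i) ι₂) (rb2 : ∀ j, Coalgebra.Repr k (rb.right j) κ₂) :
    (∑ i ∈ ra.index, ∑ j ∈ rb.index, ∑ p ∈ (ra2 i).index, ∑ q ∈ (rb2 j).index,
      𝑺 (ra.left i * rb.left j) *
        (((ra2 i).left p * (rb2 j).left q) * (𝑺 ((rb2 j).right q) * 𝑺 ((ra2 i).right p))))
    = 𝑺 (a * b) := by
  have hab := congrArg (DFunLike.coe (𝑺 : U →ₗ[k] U)) (sum_counit_right_smul (mulRepr ra rb))
  rw [map_sum] at hab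
  simp only [map_smul, mulRepr] at hab
  rw [Finset.sum_product] at hab
  rw [← hab]
  refine Finset.sum_congr rfl fun i _ => Finset.sum_congr rfl fun j _ => ?_
  have hq : ∀ p, (∑ q ∈ (rb2 j).index,
      𝑺 (ra.left i * rb.left j) *
        (((ra2 i).left p * (rb2 j).left q) * (𝑺 ((rb2 j).right q) * 𝑺 ((ra2 i).right p))))
      = ε (rb.right j) •
        (𝑺 (ra.left i * rb.left j) * ((ra2 i).left p * 𝑺 ((ra2 i).right p))) := by
    intro p
    have hterm : ∀ q, ((ra2 i).left p * (rb2 j).left q) *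
        (𝑺 ((rb2 j).right q) * 𝑺 ((ra2 i).right p))
        = (ra2 i).left p *
          (((rb2 j).left q * 𝑺 ((rb2 j).right q)) * 𝑺 ((ra2 i).right p)) := fun q => by
      rw [mul_assoc, ← mul_assoc ((rb2 j).left q)]
    simp only [hterm]
    rw [← Finset.mul_sum, ← Finset.mul_sum, ← Finset.sum_mul,
      HopfAlgebra.sum_mul_antipode_eq_smul (rb2 j), smul_mul_assoc, one_mul,
      mul_smul_comm, mul_smul_comm]
  simp only [hq]
  rw [← Finset.smul_sum, ← Finset.mul_sum, HopfAlgebra.sum_mul_antipode_eq_smul (ra2 i),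
    mul_smul_comm, mul_one, smul_smul, Bialgebra.counit_mul, mul_comm (ε (rb.right j))]

lemma M_eq_mul_antipode {a b : U} (ra : Coalgebra.Repr k a ι) (rb : Coalgebra.Repr k b κ)
    (ra1 : ∀ i, Coalgebra.Repr k (ra.left i) ι₁) (ra2 : ∀ i, Coalgebra.Repr k (ra.right i) ι₂)
    (rb1 : ∀ j, Coalgebra.Repr k (rb.left j) κ₁) (rb2 : ∀ j, Coalgebra.Repr k (rb.right j) κ₂) :
    (∑ i ∈ ra.index, ∑ j ∈ rb.index, ∑ p ∈ (ra2 i).index, ∑ q ∈ (rb2 j).index,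
      𝑺 (ra.left i * rb.left j) *
        (((ra2 i).left p * (rb2 j).left q) * (𝑺 ((rb2 j).right q) * 𝑺 ((ra2 i).right p))))
    = 𝑺 b * 𝑺 a := by
  calc
    (∑ i ∈ ra.index, ∑ j ∈ rb.index, ∑ p ∈ (ra2 i).index, ∑ q ∈ (rb2 j).index,
      𝑺 (ra.left i * rb.left j) *
        (((ra2 i).left p * (rb2 j).left q) * (𝑺 ((rb2 j).right q) * 𝑺 ((ra2 i).right p))))
      = ∑ j ∈ rb.index, ∑ q ∈ (rb2 j).index, ∑ i ∈ ra.index, ∑ p ∈ (ra2 i).index,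
          𝑺 (ra.left i * rb.left j) *
            (((ra2 i).left p * (rb2 j).left q) *
              (𝑺 ((rb2 j).right q) * 𝑺 ((ra2 i).right p))) := by
        rw [Finset.sum_comm]
        refine Finset.sum_congr rfl fun j _ => ?_
        calc (∑ i ∈ ra.index, ∑ p ∈ (ra2 i).index, ∑ q ∈ (rb2 j).index,
                𝑺 (ra.left i * rb.left j) *
                  (((ra2 i).left p * (rb2 j).left q) *
                    (𝑺 ((rb2 j).right q) * 𝑺 ((ra2 i).right p))))
            = ∑ i ∈ ra.index, ∑ q ∈ (rb2 j).index, ∑ p ∈ (ra2 i).index,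
                𝑺 (ra.left i * rb.left j) *
                  (((ra2 i).left p * (rb2 j).left q) *
                    (𝑺 ((rb2 j).right q) * 𝑺 ((ra2 i).right p))) :=
              Finset.sum_congr rfl fun i _ => Finset.sum_comm
          _ = _ := Finset.sum_comm
    _ = ∑ j ∈ rb.index, ∑ q ∈ (rb2 j).index, ∑ i ∈ ra.index, ∑ p ∈ (ra1 i).index,
          𝑺 ((ra1 i).left p * rb.left j) *
            (((ra1 i).right p * (rb2 j).left q) *
              (𝑺 ((rb2 j).right q) * 𝑺 (ra.right i))) := by
        refine Finset.sum_congr rfl fun j _ => Finset.sum_congr rfl fun q _ => ?_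
        exact coassoc_sum_left _ _ _ ra ra1 ra2
    _ = ∑ i ∈ ra.index, ∑ p ∈ (ra1 i).index, ∑ j ∈ rb.index, ∑ q ∈ (rb2 j).index,
          𝑺 ((ra1 i).left p * rb.left j) *
            (((ra1 i).right p * (rb2 j).left q) *
              (𝑺 ((rb2 j).right q) * 𝑺 (ra.right i))) := by
        calc (∑ j ∈ rb.index, ∑ q ∈ (rb2 j).index, ∑ i ∈ ra.index, ∑ p ∈ (ra1 i).index,
                𝑺 ((ra1 i).left p * rb.left j) *
                  (((ra1 i).right p * (rb2 j).left q) *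
                    (𝑺 ((rb2 j).right q) * 𝑺 (ra.right i))))
            = ∑ j ∈ rb.index, ∑ i ∈ ra.index, ∑ q ∈ (rb2 j).index, ∑ p ∈ (ra1 i).index,
                𝑺 ((ra1 i).left p * rb.left j) *
                  (((ra1 i).right p * (rb2 j).left q) *
                    (𝑺 ((rb2 j).right q) * 𝑺 (ra.right i))) :=
              Finset.sum_congr rfl fun j _ => Finset.sum_comm
          _ = ∑ j ∈ rb.index, ∑ i ∈ ra.index, ∑ p ∈ (ra1 i).index, ∑ q ∈ (rb2 j).index,
                𝑺 ((ra1 i).left p * rb.left j) *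
                  (((ra1 i).right p * (rb2 j).left q) *
                    (𝑺 ((rb2 j).right q) * 𝑺 (ra.right i))) :=
              Finset.sum_congr rfl fun j _ => Finset.sum_congr rfl fun i _ => Finset.sum_comm
          _ = ∑ i ∈ ra.index, ∑ j ∈ rb.index, ∑ p ∈ (ra1 i).index, ∑ q ∈ (rb2 j).index,
                𝑺 ((ra1 i).left p * rb.left j) *
                  (((ra1 i).right p * (rb2 j).left q) *
                    (𝑺 ((rb2 j).right q) * 𝑺 (ra.right i))) :=
              Finset.sum_comm
          _ = _ :=
              Finset.sum_congr rfl fun i _ => Finset.sum_comm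
    _ = ∑ i ∈ ra.index, ∑ p ∈ (ra1 i).index, ∑ j ∈ rb.index, ∑ q ∈ (rb1 j).index,
          𝑺 ((ra1 i).left p * (rb1 j).left q) *
            (((ra1 i).right p * (rb1 j).right q) *
              (𝑺 (rb.right j) * 𝑺 (ra.right i))) := by
        refine Finset.sum_congr rfl fun i _ => Finset.sum_congr rfl fun p _ => ?_
        exact coassoc_sum_right _ _ _ rb rb1 rb2
    _ = ∑ i ∈ ra.index, ∑ j ∈ rb.index, ∑ p ∈ (ra1 i).index, ∑ q ∈ (rb1 j).index,
          𝑺 ((ra1 i).left p * (rb1 j).left q) *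
            (((ra1 i).right p * (rb1 j).right q) *
              (𝑺 (rb.right j) * 𝑺 (ra.right i))) :=
        Finset.sum_congr rfl fun i _ => Finset.sum_comm
    _ = ∑ i ∈ ra.index, ∑ j ∈ rb.index, (ε (ra.left i) * ε (rb.left j)) •
          (𝑺 (rb.right j) * 𝑺 (ra.right i)) := by
        refine Finset.sum_congr rfl fun i _ => Finset.sum_congr rfl fun j _ => ?_
        have hterm : ∀ p q, 𝑺 ((ra1 i).left p * (rb1 j).left q) *
            (((ra1 i).right p * (rb1 j).right q) * (𝑺 (rb.right j) * 𝑺 (ra.right i)))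
            = (𝑺 ((ra1 i).left p * (rb1 j).left q) *
                ((ra1 i).right p * (rb1 j).right q)) *
              (𝑺 (rb.right j) * 𝑺 (ra.right i)) := fun p q => by
          rw [← mul_assoc]
        simp only [hterm]
        rw [← Finset.sum_product', ← Finset.sum_mul]
        have hsum := HopfAlgebra.sum_antipode_mul_eq_smul (mulRepr (ra1 i) (rb1 j))
        simp only [mulRepr] at hsum
        rw [hsum, smul_mul_assoc, one_mul, Bialgebra.counit_mul]
    _ = 𝑺 b * 𝑺 a := by
        have ha : 𝑺 a = ∑ i ∈ ra.index, ε (ra.left i) • 𝑺 (ra.right i) := by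
          have := congrArg (DFunLike.coe (𝑺 : U →ₗ[k] U)) (sum_counit_left_smul ra)
          rw [map_sum] at this
          simp only [map_smul] at this
          exact this.symm
        have hb : 𝑺 b = ∑ j ∈ rb.index, ε (rb.left j) • 𝑺 (rb.right j) := by
          have := congrArg (DFunLike.coe (𝑺 : U →ₗ[k] U)) (sum_counit_left_smul rb)
          rw [map_sum] at this
          simp only [map_smul] at this
          exact this.symm
        rw [ha, hb, Finset.sum_mul_sum]
        rw [Finset.sum_comm]
        refine Finset.sum_congr rfl fun j _ => Finset.sum_congr rfl fun i _ => ?_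
        rw [smul_mul_smul_comm, mul_comm (ε (rb.left j))]

theorem antipode_mul_rev (a b : U) : 𝑺 (a * b) = 𝑺 b * 𝑺 a := by
  classical
  rw [← M_eq_antipode_mul (ℛ k a) (ℛ k b) (fun i => ℛ k _) (fun j => ℛ k _),
    M_eq_mul_antipode (ℛ k a) (ℛ k b) (fun i => ℛ k _) (fun i => ℛ k _)
      (fun j => ℛ k _) (fun j => ℛ k _)]

end AntipodeMul

section MainAux

variable {k : Type} [CommRing k] {U : Type} [Ring U] [HopfAlgebra k U]

noncomputable def phiMap (f g : Module.Dual k U) : U ⊗[k] (U ⊗[k] U) →ₗ[k] U :=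
  (TensorProduct.lid k U).toLinearMap ∘ₗ
    TensorProduct.map f ((TensorProduct.lid k U).toLinearMap ∘ₗ TensorProduct.map g LinearMap.id)

@[simp] lemma phiMap_tmul (f g : Module.Dual k U) (x y z : U) :
    phiMap f g (x ⊗ₜ[k] (y ⊗ₜ[k] z)) = f x • g y • z := by
  simp [phiMap]
  rw [smul_comm]

noncomputable def psiMap (f g : Module.Dual k U) : U ⊗[k] (U ⊗[k] U) →ₗ[k] U :=
  (TensorProduct.rid k U).toLinearMap ∘ₗ
    TensorProduct.map (HopfAlgebra.antipode (R := k))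
      ((TensorProduct.lid k k).toLinearMap ∘ₗ TensorProduct.map f g)

@[simp] lemma psiMap_tmul (f g : Module.Dual k U) (x y z : U) :
    psiMap f g (x ⊗ₜ[k] (y ⊗ₜ[k] z)) = (f y * g z) • HopfAlgebra.antipode (R := k) x := by
  simp [psiMap, TensorProduct.rid_tmul, smul_eq_mul]

lemma hmapsA (f g : Module.Dual k U) (T : U ⊗[k] U) :
    (TensorProduct.lid k U) (TensorProduct.map
        ((TensorProduct.lid k k).toLinearMap ∘ₗ (TensorProduct.map f g) ∘ₗ
          (Coalgebra.comul (R := k) (A := U))) LinearMap.id T)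
    = phiMap f g ((Algebra.TensorProduct.assoc k k k U U U)
        ((Algebra.TensorProduct.map (Bialgebra.comulAlgHom k U) (AlgHom.id k U)) T)) := by
  induction T using TensorProduct.induction_on with
  | zero => simp
  | add T1 T2 h1 h2 => simp only [map_add, h1, h2]
  | tmul a b =>
    simp only [TensorProduct.map_tmul, LinearMap.comp_apply, LinearEquiv.coe_coe,
      Algebra.TensorProduct.map_tmul, AlgHom.coe_id, id_eq, Bialgebra.comulAlgHom_apply,
      LinearMap.id_coe]
    generalize Coalgebra.comul (R := k) a = c
    induction c using TensorProduct.induction_on with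
    | zero => simp
    | tmul x y =>
      simp [Algebra.TensorProduct.assoc_tmul, TensorProduct.lid_tmul, smul_smul, smul_eq_mul]
    | add u v hu hv =>
      simp only [map_add, TensorProduct.add_tmul] at hu hv ⊢
      rw [hu, hv]

lemma hmapsB (f g : Module.Dual k U) (T : U ⊗[k] U) :
    (TensorProduct.rid k U) (TensorProduct.map LinearMap.id
        ((TensorProduct.lid k k).toLinearMap ∘ₗ (TensorProduct.map f g) ∘ₗ
          (Coalgebra.comul (R := k) (A := U)))
        (TensorProduct.map (HopfAlgebra.antipode (R := k)) LinearMap.id T))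
    = psiMap f g ((Algebra.TensorProduct.map (AlgHom.id k U) (Bialgebra.comulAlgHom k U)) T) := by
  induction T using TensorProduct.induction_on with
  | zero => simp
  | add T1 T2 h1 h2 => simp only [map_add, h1, h2]
  | tmul a b =>
    simp only [TensorProduct.map_tmul, LinearMap.comp_apply, LinearEquiv.coe_coe,
      Algebra.TensorProduct.map_tmul, AlgHom.coe_id, id_eq, Bialgebra.comulAlgHom_apply,
      LinearMap.id_coe]
    generalize Coalgebra.comul (R := k) b = c
    induction c using TensorProduct.induction_on with
    | zero => simp
    | tmul x y =>
      simp [TensorProduct.rid_tmul, TensorProduct.lid_tmul, smul_eq_mul]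
    | add u v hu hv =>
      simp only [map_add, TensorProduct.tmul_add] at hu hv ⊢
      rw [hu, hv]

lemma hplusB (f g : Module.Dual k U) (x y : U ⊗[k] U) :
    phiMap f g ((Algebra.TensorProduct.map (AlgHom.id k U)
        ((Algebra.TensorProduct.includeRight : U →ₐ[k] U ⊗[k] U)) x)
      * ((Algebra.TensorProduct.includeRight : (U ⊗[k] U) →ₐ[k] U ⊗[k] (U ⊗[k] U))) y)
    = (TensorProduct.lid k U) (TensorProduct.map f LinearMap.id x) *
      (TensorProduct.lid k U) (TensorProduct.map g LinearMap.id y) := by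
  induction x using TensorProduct.induction_on with
  | zero => simp
  | add x1 x2 h1 h2 => simp only [map_add, add_mul, h1, h2]
  | tmul a b =>
    induction y using TensorProduct.induction_on with
    | zero => simp
    | add y1 y2 h1 h2 => simp only [map_add, mul_add, h1, h2]
    | tmul c d =>
      simp only [Algebra.TensorProduct.map_tmul, AlgHom.coe_id, id_eq,
        Algebra.TensorProduct.includeRight_apply, Algebra.TensorProduct.tmul_mul_tmul,
        mul_one, one_mul, phiMap_tmul, TensorProduct.map_tmul, TensorProduct.lid_tmul,
        LinearMap.id_coe]
      rw [smul_mul_smul_comm, smul_smul]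

lemma hminusB (f g : Module.Dual k U) (x y : U ⊗[k] U) :
    psiMap f g ((Algebra.TensorProduct.map (AlgHom.id k U)
        ((Algebra.TensorProduct.includeRight : U →ₐ[k] U ⊗[k] U)) x)
      * (Algebra.TensorProduct.map (AlgHom.id k U)
          ((Algebra.TensorProduct.includeLeft (S := k) : U →ₐ[k] U ⊗[k] U))) y)
    = (TensorProduct.rid k U) (TensorProduct.map LinearMap.id f
        (TensorProduct.map (HopfAlgebra.antipode (R := k)) LinearMap.id y)) *
      (TensorProduct.rid k U) (TensorProduct.map LinearMap.id g
        (TensorProduct.map (HopfAlgebra.antipode (R := k)) LinearMap.id x)) := by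
  induction x using TensorProduct.induction_on with
  | zero => simp
  | add x1 x2 h1 h2 => simp only [map_add, add_mul, mul_add, h1, h2]
  | tmul a b =>
    induction y using TensorProduct.induction_on with
    | zero => simp
    | add y1 y2 h1 h2 => simp only [map_add, mul_add, add_mul, h1, h2]
    | tmul c d =>
      simp only [Algebra.TensorProduct.map_tmul, AlgHom.coe_id, id_eq,
        Algebra.TensorProduct.includeRight_apply, Algebra.TensorProduct.includeLeft_apply,
        Algebra.TensorProduct.tmul_mul_tmul, mul_one, one_mul, psiMap_tmul,
        TensorProduct.map_tmul, TensorProduct.rid_tmul, LinearMap.id_coe]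
      rw [smul_mul_smul_comm, antipode_mul_rev]

end MainAux


/-- the maps `R⁺(f) = ⟨R, f ⊗ id⟩` and `R⁻(f) = ⟨R̃, id ⊗ f⟩`
(with `R̃ = (S ⊗ id)(R)`) are algebra homomorphisms from the dual `F = U*` (with the
convolution product dual to `Δ`) to `U`, given the hexagon axioms
`(Δ ⊗ id)(R) = R₁₃R₂₃`, `(id ⊗ Δ)(R) = R₁₃R₁₂` and quasitriangularity
`R Δ(a) = Δᵒᵖ(a) R`. -/
theorem rplus_rminus_algebra_homs (k : Type) [CommRing k] (U : Type) [Ring U]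
    [HopfAlgebra k U] (R : U ⊗[k] U)
    (R12 R13 R23 : U ⊗[k] (U ⊗[k] U))
    (h12 : R12 = Algebra.TensorProduct.map (AlgHom.id k U)
      (Algebra.TensorProduct.includeLeft (S := k)) R)
    (h13 : R13 = Algebra.TensorProduct.map (AlgHom.id k U)
      Algebra.TensorProduct.includeRight R)
    (h23 : R23 = Algebra.TensorProduct.includeRight R)
    (hex1 : (Algebra.TensorProduct.assoc k k k U U U)
        (Algebra.TensorProduct.map (Bialgebra.comulAlgHom k U) (AlgHom.id k U) R)
      = R13 * R23)
    (hex2 : Algebra.TensorProduct.map (AlgHom.id k U) (Bialgebra.comulAlgHom k U) R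
      = R13 * R12)
    (hqt : ∀ a : U, R * Bialgebra.comulAlgHom k U a
      = (TensorProduct.comm k U U) (Bialgebra.comulAlgHom k U a) * R)
    -- `R⁺` and `R⁻`
    (rplus rminus : Module.Dual k U → U)
    (hplus : ∀ f, rplus f = (TensorProduct.lid k U) (TensorProduct.map f LinearMap.id R))
    (hminus : ∀ f, rminus f = (TensorProduct.rid k U) (TensorProduct.map LinearMap.id f
      (TensorProduct.map (HopfAlgebra.antipode (R := k)) LinearMap.id R)))
    -- the convolution product on `F = U*`, dual to the coproduct of `U`
    (conv : Module.Dual k U → Module.Dual k U → Module.Dual k U)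
    (hconv : ∀ f g, conv f g
      = (TensorProduct.lid k k).toLinearMap ∘ₗ (TensorProduct.map f g) ∘ₗ
          (Coalgebra.comul (R := k) (A := U))) :
    ∀ f g : Module.Dual k U,
      rplus (conv f g) = rplus f * rplus g ∧
      rminus (conv f g) = rminus f * rminus g := by
  intro f g
  constructor
  · rw [hplus, hplus, hplus, hconv, hmapsA f g R, hex1, h13, h23]
    exact hplusB f g R R
  · rw [hminus, hminus, hminus, hconv, hmapsB f g R, hex2, h13, h12]
    exact hminusB f g R R
end
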